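/- Under the stochastic coordinate PIGD setup, for every k ≥ 0: [E F(x^k) + (β_k/(2√m γ_k)) E‖x^k − x^{k−1}‖²] − [E F(x^{k+1}) + (β_{k+1}/(2√m γ_{k+1})) E‖x^{k+1} − x^k‖²] ≥ ((1 − β_k/√m)/γ_k − L/2)·E‖x^{k+1} − x^k‖². -/

import Mathlib

/-!
The update changes only the block `i = i_k`, by a proximal step from an extrapolated point. The
descent lemma for the `L`-smooth `f`, the three-point inequality of the proximal map of the
convex `g_i` (tested at the old block), and Young's inequality with weight `√m` on the inertial
cross term bound `F(x^{k+1})` pathwise by `F(x^k)`, a negative multiple of `‖x^{k+1} - x^k‖²` and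
`β_k √m / (2γ_k)` times the squared `i_k`-th block of `x^k - x^{k-1}`. Since `x^k` and `x^{k-1}`
are functions of `i_0, …, i_{k-1}` only, they are independent of the uniform index `i_k`, so the
expected squared block is `1/m` times `E‖x^k - x^{k-1}‖²`. Taking expectations, and using that
`β_k / γ_k` is non-increasing, gives the inequality.
-/

abbrev PIGDSpace (m : ℕ) (nn : Fin m → ℕ) :=
  PiLp 2 fun i : Fin m => EuclideanSpace ℝ (Fin (nn i))

open Set Filter Topology MeasureTheory ProbabilityTheory
open scoped RealInnerProductSpace ENNReal

section InnerProductSpace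

variable {E : Type*} [NormedAddCommGroup E] [InnerProductSpace ℝ E]

theorem le_add_inner_add_sq_of_lipschitz_gradient [CompleteSpace E] {f : E → ℝ} {f' : E → E}
    {L : ℝ} (hf' : ∀ x, HasGradientAt f (f' x) x)
    (hlip : ∀ x y, ‖f' x - f' y‖ ≤ L * ‖x - y‖) (x y : E) :
    f y ≤ f x + ⟪f' x, y - x⟫ + L / 2 * ‖y - x‖ ^ 2 := by
  set v := y - x
  set φ : ℝ → ℝ := fun t => f (x + t • v) - t * ⟪f' x, v⟫ - L / 2 * t ^ 2 * ‖v‖ ^ 2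
  have hφ' : ∀ t, HasDerivAt φ (⟪f' (x + t • v), v⟫ - ⟪f' x, v⟫ - L * t * ‖v‖ ^ 2) t := by
    intro t
    have hline : HasDerivAt (fun s : ℝ => x + s • v) v t := by
      simpa using ((hasDerivAt_id t).smul_const v).const_add x
    have hf := (hf' (x + t • v)).hasFDerivAt.comp_hasDerivAt t hline
    simp only [InnerProductSpace.toDual_apply_apply] at hf
    refine ((hf.sub ((hasDerivAt_id t).mul_const ⟪f' x, v⟫)).sub
      (((hasDerivAt_pow 2 t).const_mul (L / 2)).mul_const (‖v‖ ^ 2))).congr_deriv ?_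
    simp only [one_mul, Nat.cast_ofNat, Nat.add_one_sub_one, pow_one]
    ring
  have hanti : AntitoneOn φ (Icc 0 1) := by
    refine antitoneOn_of_hasDerivWithinAt_nonpos (convex_Icc 0 1)
      (fun t _ => (hφ' t).continuousAt.continuousWithinAt) (fun t _ => (hφ' t).hasDerivWithinAt)
      fun t ht => ?_
    rw [interior_Icc] at ht
    have hgrowth : ⟪f' (x + t • v) - f' x, v⟫ ≤ L * t * ‖v‖ ^ 2 :=
      calc ⟪f' (x + t • v) - f' x, v⟫ ≤ ‖f' (x + t • v) - f' x‖ * ‖v‖ := real_inner_le_norm _ _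
        _ ≤ L * ‖x + t • v - x‖ * ‖v‖ := by gcongr; exact hlip _ _
        _ = L * t * ‖v‖ ^ 2 := by
          rw [add_sub_cancel_left, norm_smul, Real.norm_of_nonneg ht.1.le]; ring
    rw [inner_sub_left] at hgrowth
    linarith
  have h01 := hanti (left_mem_Icc.2 zero_le_one) (right_mem_Icc.2 zero_le_one) zero_le_one
  simp only [φ, v] at h01
  norm_num at h01
  linarith

theorem IsMinOn.add_sq_le_of_convexOn {g : E → ℝ} (hg : ConvexOn ℝ univ g) {γ : ℝ} {y p : E}
    (hp : IsMinOn (fun z => ‖z - y‖ ^ 2 / (2 * γ) + g z) univ p) (z : E) :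
    ‖p - y‖ ^ 2 / (2 * γ) + g p + ‖z - p‖ ^ 2 / (2 * γ) ≤ ‖z - y‖ ^ 2 / (2 * γ) + g z := by
  set q := ‖z - p‖ ^ 2 / (2 * γ)
  have hsegment : ∀ t ∈ Ioc (0 : ℝ) 1,
      ‖p - y‖ ^ 2 / (2 * γ) + g p ≤ ‖z - y‖ ^ 2 / (2 * γ) + g z - (1 - t) * q := by
    intro t ht
    have hsq : ‖(1 - t) • p + t • z - y‖ ^ 2 / (2 * γ)
        = (1 - t) * (‖p - y‖ ^ 2 / (2 * γ)) + t * (‖z - y‖ ^ 2 / (2 * γ)) - t * (1 - t) * q := by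
      have hz : z - y = (p - y) + (z - p) := by abel
      rw [show (1 - t) • p + t • z - y = (p - y) + t • (z - p) by module, norm_add_sq_real,
        real_inner_smul_right, norm_smul, Real.norm_eq_abs, mul_pow, sq_abs, hz,
        norm_add_sq_real]
      ring
    have hmin : ‖p - y‖ ^ 2 / (2 * γ) + g p
        ≤ ‖(1 - t) • p + t • z - y‖ ^ 2 / (2 * γ) + g ((1 - t) • p + t • z) :=
      hp (mem_univ _)
    have hconv := hg.2 (mem_univ p) (mem_univ z) (sub_nonneg.2 ht.2) ht.1.le (by ring)
    rw [hsq] at hmin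
    rw [smul_eq_mul, smul_eq_mul] at hconv
    refine le_of_mul_le_mul_left ?_ ht.1
    linarith
  have hlim : Tendsto (fun t => ‖z - y‖ ^ 2 / (2 * γ) + g z - (1 - t) * q) (𝓝[>] 0)
      (𝓝 (‖z - y‖ ^ 2 / (2 * γ) + g z - q)) := by
    refine tendsto_nhdsWithin_of_tendsto_nhds ?_
    have hcont : Continuous fun t : ℝ => ‖z - y‖ ^ 2 / (2 * γ) + g z - (1 - t) * q := by fun_prop
    simpa using hcont.tendsto 0
  have := ge_of_tendsto hlim (eventually_of_mem (Ioc_mem_nhdsGT zero_lt_one) hsegment)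
  linarith

theorem IsMinOn.le_of_prox_extrapolated {g : E → ℝ} (hg : ConvexOn ℝ univ g) {γ β : ℝ}
    (hγ : γ ≠ 0) {x u w p : E}
    (hp : IsMinOn (fun z => ‖z - (x - γ • u + β • w)‖ ^ 2 / (2 * γ) + g z) univ p) :
    g p ≤ g x - ‖p - x‖ ^ 2 / γ - ⟪p - x, u⟫ + β / γ * ⟪p - x, w⟫ := by
  have h := hp.add_sq_le_of_convexOn hg x
  rw [show p - (x - γ • u + β • w) = (p - x) + (γ • u - β • w) by module,
    show x - (x - γ • u + β • w) = γ • u - β • w by module, norm_add_sq_real, inner_sub_right,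
    real_inner_smul_right, real_inner_smul_right, norm_sub_rev x p] at h
  have hexpand : (‖p - x‖ ^ 2 + 2 * (γ * ⟪p - x, u⟫ - β * ⟪p - x, w⟫)) / (2 * γ)
      + ‖p - x‖ ^ 2 / (2 * γ) = ‖p - x‖ ^ 2 / γ + ⟪p - x, u⟫ - β / γ * ⟪p - x, w⟫ := by
    field_simp
    ring
  rw [add_div] at h
  linarith

theorem real_inner_le_sq_div_add_mul_sq {s : ℝ} (hs : 0 < s) (a b : E) :
    ⟪a, b⟫ ≤ ‖a‖ ^ 2 / (2 * s) + s * ‖b‖ ^ 2 / 2 := by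
  have hsq : ‖a‖ ^ 2 / (2 * s) + s * ‖b‖ ^ 2 / 2 - ‖a‖ * ‖b‖ = (‖a‖ - s * ‖b‖) ^ 2 / (2 * s) := by
    field_simp
    ring
  have : 0 ≤ (‖a‖ - s * ‖b‖) ^ 2 / (2 * s) := by positivity
  linarith [real_inner_le_norm a b]

end InnerProductSpace

theorem inertial_stepsize_pos {s c L β : ℝ} (hs : 1 ≤ s) (hβ : 0 ≤ β) (hβ1 : β < 1) (hc : 0 < c)
    (hL : 0 < L) : 0 < 2 * (1 - β / s) * c / L := by
  have : 0 < 1 - β / s := sub_pos.2 ((div_le_self hβ hs).trans_lt hβ1)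
  positivity

theorem div_inertial_stepsize_le {s c L β β' : ℝ} (hs : 1 ≤ s) (hβ' : 0 ≤ β') (hβ'β : β' ≤ β)
    (hβ1 : β < 1) (hc : 0 < c) (hL : 0 < L) :
    β' / (2 * s * (2 * (1 - β' / s) * c / L)) ≤ β / (2 * s * (2 * (1 - β / s) * c / L)) := by
  have hβ := hβ'.trans hβ'β
  have := inertial_stepsize_pos hs hβ hβ1 hc hL
  have : 0 < s := zero_lt_one.trans_le hs
  gcongr

namespace PiLp

variable {ι : Type*} [Fintype ι] {E : ι → Type*} {i : ι}

theorem norm_sq_eq_of_apply_eq_zero_of_ne [∀ i, SeminormedAddCommGroup (E i)] {v : PiLp 2 E}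
    (hv : ∀ j ≠ i, v j = 0) : ‖v‖ ^ 2 = ‖v i‖ ^ 2 := by
  rw [norm_sq_eq_of_L2, Fintype.sum_eq_single i fun j hj => by rw [hv j hj, norm_zero, sq,
    mul_zero]]

theorem inner_eq_of_apply_eq_zero_of_ne [∀ i, NormedAddCommGroup (E i)]
    [∀ i, InnerProductSpace ℝ (E i)] {v : PiLp 2 E} (hv : ∀ j ≠ i, v j = 0) (w : PiLp 2 E) :
    ⟪w, v⟫ = ⟪w i, v i⟫ := by
  rw [inner_apply, Fintype.sum_eq_single i fun j hj => by rw [hv j hj, inner_zero_right]]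

end PiLp

section CoordinateStep

variable {ι : Type*} [Fintype ι] {E : ι → Type*} [∀ i, NormedAddCommGroup (E i)]
  [∀ i, InnerProductSpace ℝ (E i)] [∀ i, CompleteSpace (E i)]

theorem coordinate_prox_step_le {f : PiLp 2 E → ℝ} {f' : PiLp 2 E → PiLp 2 E}
    {g : ∀ i, E i → ℝ} {L γ β s : ℝ} (hf' : ∀ x, HasGradientAt f (f' x) x)
    (hlip : ∀ x y, ‖f' x - f' y‖ ≤ L * ‖x - y‖) {i : ι} (hg : ConvexOn ℝ univ (g i))
    (hγ : 0 < γ) (hβ : 0 ≤ β) (hs : 0 < s) {xp x x' : PiLp 2 E}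
    (hoff : ∀ j ≠ i, x' j = x j)
    (hprox : IsMinOn (fun z => ‖z - (x i - γ • f' x i + β • (x i - xp i))‖ ^ 2 / (2 * γ) + g i z)
      univ (x' i)) :
    f x' + ∑ j, g j (x' j) ≤ f x + ∑ j, g j (x j)
      - ((1 - β / s) / γ - L / 2 + β / (2 * s * γ)) * ‖x' - x‖ ^ 2
      + β * s / (2 * γ) * ‖x i - xp i‖ ^ 2 := by
  have hsupp : ∀ j ≠ i, (x' - x) j = 0 := fun j hj => by rw [PiLp.sub_apply, hoff j hj, sub_self]
  have hsmooth := le_add_inner_add_sq_of_lipschitz_gradient hf' hlip x x'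
  rw [PiLp.inner_eq_of_apply_eq_zero_of_ne hsupp, PiLp.norm_sq_eq_of_apply_eq_zero_of_ne hsupp,
    PiLp.sub_apply, real_inner_comm] at hsmooth
  have hg_step := hprox.le_of_prox_extrapolated hg hγ.ne'
  have hg_sum : ∑ j, g j (x' j) = ∑ j, g j (x j) + (g i (x' i) - g i (x i)) := by
    rw [← sub_eq_iff_eq_add', ← Finset.sum_sub_distrib,
      Fintype.sum_eq_single i fun j hj => by rw [hoff j hj, sub_self]]
  have hyoung : β / γ * ⟪x' i - x i, x i - xp i⟫
      ≤ β / (2 * s * γ) * ‖x' i - x i‖ ^ 2 + β * s / (2 * γ) * ‖x i - xp i‖ ^ 2 := by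
    calc β / γ * ⟪x' i - x i, x i - xp i⟫
        ≤ β / γ * (‖x' i - x i‖ ^ 2 / (2 * s) + s * ‖x i - xp i‖ ^ 2 / 2) := by
          gcongr; exact real_inner_le_sq_div_add_mul_sq hs _ _
      _ = _ := by field_simp
  rw [PiLp.norm_sq_eq_of_apply_eq_zero_of_ne hsupp, PiLp.sub_apply, hg_sum]
  have : ((1 - β / s) / γ - L / 2 + β / (2 * s * γ)) * ‖x' i - x i‖ ^ 2
      = ‖x' i - x i‖ ^ 2 / γ - L / 2 * ‖x' i - x i‖ ^ 2 - β / (2 * s * γ) * ‖x' i - x i‖ ^ 2 := by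
    field_simp
    ring
  linarith

end CoordinateStep

section RandomIndex

variable {Ω ι : Type*} [Fintype ι] {I : Ω → ι} {H : ι → Ω → ℝ}

theorem apply_index_eq_sum_indicator :
    (fun ω => H (I ω) ω) = fun ω => ∑ j, (I ⁻¹' {j}).indicator (H j) ω := by
  ext ω
  rw [Fintype.sum_eq_single (f := fun j => (I ⁻¹' {j}).indicator (H j) ω) (I ω)
    fun j hj => indicator_of_notMem (s := I ⁻¹' {j}) (Ne.symm hj) _,
    indicator_of_mem (s := I ⁻¹' {I ω}) rfl]

variable [MeasurableSpace Ω] {μ : Measure Ω} [MeasurableSpace ι] [MeasurableSingletonClass ι]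

theorem integrable_apply_index (hI : Measurable I) (hH : ∀ j, Integrable (H j) μ) :
    Integrable (fun ω => H (I ω) ω) μ := by
  rw [apply_index_eq_sum_indicator]
  exact integrable_finsetSum _ fun j _ => (hH j).indicator (hI (measurableSet_singleton j))

theorem integral_apply_index_of_indepFun (hI : Measurable I) (hH : ∀ j, Integrable (H j) μ)
    (hindep : ∀ j, IndepFun I (H j) μ) :
    ∫ ω, H (I ω) ω ∂μ = ∑ j, μ.real (I ⁻¹' {j}) * ∫ ω, H j ω ∂μ := by
  rw [apply_index_eq_sum_indicator, integral_finsetSum _ fun j _ =>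
    (hH j).indicator (hI (measurableSet_singleton j))]
  refine Finset.sum_congr rfl fun j _ => ?_
  have hind : Measurable (({j} : Set ι).indicator (1 : ι → ℝ)) :=
    measurable_const.indicator (measurableSet_singleton j)
  have hmul : (I ⁻¹' {j}).indicator (H j) = fun ω => ({j} : Set ι).indicator 1 (I ω) * H j ω :=
    funext fun ω => by by_cases h : I ω = j <;> simp [h]
  rw [hmul, ← integral_indicator_one (hI (measurableSet_singleton j))]
  exact ((hindep j).comp hind measurable_id).integral_fun_mul_eq_mul_integral
    (hind.comp hI).aestronglyMeasurable (hH j).aestronglyMeasurable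

end RandomIndex

theorem ProbabilityTheory.iIndepFun.indepFun_history {Ω β : Type*} [MeasurableSpace Ω]
    {μ : Measure Ω} [MeasurableSpace β] {u : ℕ → Ω → β} (hu : iIndepFun u μ)
    (hmeas : ∀ n, Measurable (u n)) (k : ℕ) :
    IndepFun (u k) (fun ω (i : Fin k) => u i ω) μ := by
  have h := hu.indepFun_finset {k} (Finset.range k) (by simp) hmeas
  exact h.comp (measurable_pi_apply ⟨k, Finset.mem_singleton_self k⟩)
    (measurable_pi_lambda _ fun i : Fin k => measurable_pi_apply ⟨i, Finset.mem_range.2 i.isLt⟩)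

theorem exists_eq_comp_history {Ω α β : Type*} {u : ℕ → Ω → β} {Y : ℤ → Ω → α} {a b : α}
    (ha : ∀ ω, Y (-1) ω = a) (hb : ∀ ω, Y 0 ω = b) {T : ℕ → β → α → α → α}
    (hT : ∀ (n : ℕ) ω, Y (n + 1) ω = T n (u n ω) (Y n ω) (Y (n - 1) ω)) (n : ℕ) :
    ∃ φ ψ : (Fin n → β) → α,
      ∀ ω, Y n ω = φ (fun i => u i ω) ∧ Y (n - 1) ω = ψ (fun i => u i ω) := by
  induction n with
  | zero => exact ⟨fun _ => b, fun _ => a, fun ω => ⟨hb ω, ha ω⟩⟩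
  | succ n ih =>
    obtain ⟨φ, ψ, hφψ⟩ := ih
    refine ⟨fun v => T n (v (Fin.last n)) (φ fun i => v i.castSucc) (ψ fun i => v i.castSucc),
      fun v => φ fun i => v i.castSucc, fun ω => ?_⟩
    simp only [Fin.val_last, Fin.val_castSucc, Nat.cast_succ, add_sub_cancel_right]
    rw [hT, (hφψ ω).1, (hφψ ω).2]
    exact ⟨rfl, rfl⟩

theorem PiLp.exists_eq_comp_history_of_update {Ω ι : Type*} [DecidableEq ι] {E : ι → Type*}
    {u : ℕ → Ω → ι} {X : ℤ → Ω → PiLp 2 E} {a b : PiLp 2 E} (ha : ∀ ω, X (-1) ω = a)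
    (hb : ∀ ω, X 0 ω = b) {P : ℕ → (i : ι) → PiLp 2 E → PiLp 2 E → E i}
    (hoff : ∀ (n : ℕ) ω j, j ≠ u n ω → X (n + 1) ω j = X n ω j)
    (hon : ∀ (n : ℕ) ω, X (n + 1) ω (u n ω) = P n (u n ω) (X n ω) (X (n - 1) ω)) (n : ℕ) :
    ∃ φ ψ : (Fin n → ι) → PiLp 2 E,
      ∀ ω, X n ω = φ (fun i => u i ω) ∧ X (n - 1) ω = ψ (fun i => u i ω) := by
  refine exists_eq_comp_history ha hb
    (T := fun n i x xp => WithLp.toLp 2 (Function.update (WithLp.ofLp x) i (P n i x xp)))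
    (fun n ω => PiLp.ext fun j => ?_) n
  by_cases hj : j = u n ω
  · subst hj
    simp [hon]
  · simp [hj, hoff n ω j hj]

theorem integral_le_integral_sub_mul_add_mul {Ω : Type*} [MeasurableSpace Ω] {μ : Measure Ω}
    {a b d h : Ω → ℝ} {c e : ℝ} (ha : Integrable a μ) (hb : Integrable b μ)
    (hd : Integrable d μ) (hh : Integrable h μ) (hle : ∀ ω, a ω ≤ b ω - c * d ω + e * h ω) :
    ∫ ω, a ω ∂μ ≤ ∫ ω, b ω ∂μ - c * ∫ ω, d ω ∂μ + e * ∫ ω, h ω ∂μ := by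
  have hbd : Integrable (fun ω => b ω - c * d ω) μ := hb.sub (hd.const_mul c)
  rw [← integral_const_mul, ← integral_const_mul, ← integral_sub hb (hd.const_mul c),
    ← integral_add hbd (hh.const_mul e)]
  exact integral_mono ha (hbd.add (hh.const_mul e)) hle

theorem integral_norm_sq_apply_uniform_index {Ω ι : Type*} [MeasurableSpace Ω] {μ : Measure Ω}
    [Fintype ι] [MeasurableSpace ι] [MeasurableSingletonClass ι] {E : ι → Type*}
    [∀ i, NormedAddCommGroup (E i)] {u : ℕ → Ω → ι} (hu : iIndepFun u μ)
    (hmeas : ∀ n, Measurable (u n)) {k : ℕ}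
    (hunif : ∀ j, μ (u k ⁻¹' {j}) = (Fintype.card ι : ℝ≥0∞)⁻¹) {V : Ω → PiLp 2 E}
    {Φ : (Fin k → ι) → PiLp 2 E} (hV : ∀ ω, V ω = Φ fun i => u i ω)
    (hint : Integrable (fun ω => ‖V ω‖ ^ 2) μ) :
    Integrable (fun ω => ‖V ω (u k ω)‖ ^ 2) μ ∧
      ∫ ω, ‖V ω (u k ω)‖ ^ 2 ∂μ = (Fintype.card ι : ℝ)⁻¹ * ∫ ω, ‖V ω‖ ^ 2 ∂μ := by
  have hhist : Measurable fun ω (i : Fin k) => u i ω := measurable_pi_lambda _ fun i => hmeas i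
  have hcoord_eq : ∀ j, (fun ω => ‖V ω j‖ ^ 2) = (fun v => ‖Φ v j‖ ^ 2) ∘ fun ω i => u i ω :=
    fun j => funext fun ω => by rw [Function.comp_apply, hV]
  have hcoord_int : ∀ j, Integrable (fun ω => ‖V ω j‖ ^ 2) μ := fun j =>
    hint.mono'
      (by rw [hcoord_eq]; exact ((measurable_of_countable _).comp hhist).aestronglyMeasurable)
      (Eventually.of_forall fun ω => by
        rw [Real.norm_of_nonneg (by positivity)]
        gcongr
        exact PiLp.norm_apply_le _ _)
  have hindep : ∀ j, IndepFun (u k) (fun ω => ‖V ω j‖ ^ 2) μ := fun j => by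
    rw [hcoord_eq]
    exact (hu.indepFun_history hmeas k).comp measurable_id (measurable_of_countable _)
  refine ⟨integrable_apply_index (H := fun j ω => ‖V ω j‖ ^ 2) (hmeas k) hcoord_int, ?_⟩
  rw [integral_apply_index_of_indepFun (H := fun j ω => ‖V ω j‖ ^ 2) (hmeas k) hcoord_int hindep]
  simp only [measureReal_def, hunif, ENNReal.toReal_inv, ENNReal.toReal_natCast]
  rw [← Finset.mul_sum, ← integral_finsetSum _ fun j _ => hcoord_int j]
  simp only [PiLp.norm_sq_eq_of_L2]

theorem pigd_stmt12_general
    {m : ℕ} (hm : 0 < m) (nn : Fin m → ℕ)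
    (f F : PIGDSpace m nn → ℝ)
    (g : (i : Fin m) → EuclideanSpace ℝ (Fin (nn i)) → ℝ)
    (f' : PIGDSpace m nn → PIGDSpace m nn)
    (L c : ℝ) (hL : 0 < L) (hc0 : 0 < c)
    (hgconv : ∀ i, ConvexOn ℝ Set.univ (g i))
    (hf' : ∀ x, HasGradientAt f (f' x) x)
    (hlip : ∀ x y, ‖f' x - f' y‖ ≤ L * ‖x - y‖)
    (hF : ∀ x, F x = f x + ∑ i, g i (x i))
    (prox : (i : Fin m) → ℝ → EuclideanSpace ℝ (Fin (nn i)) → EuclideanSpace ℝ (Fin (nn i)))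
    (hprox : ∀ (i : Fin m) (γ' : ℝ) (y : EuclideanSpace ℝ (Fin (nn i))), 0 < γ' →
      IsMinOn (fun z => ‖z - y‖ ^ 2 / (2 * γ') + g i z) Set.univ (prox i γ' y))
    -- probability space and i.i.d. uniform random indices
    {Ω : Type} [MeasurableSpace Ω] (μ : MeasureTheory.Measure Ω)
    (idx : ℕ → Ω → Fin m)
    (hidx_meas : ∀ k, Measurable (idx k))
    (hidx_indep : ProbabilityTheory.iIndepFun idx μ)
    (hidx_unif : ∀ (k : ℕ) (j : Fin m), μ {ω | idx k ω = j} = (m : ENNReal)⁻¹)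
    -- the random iterates, with deterministic initial points
    (X : ℤ → Ω → PIGDSpace m nn)
    (xm1 x0 : PIGDSpace m nn)
    (hXm1 : ∀ ω, X (-1) ω = xm1) (hX0 : ∀ ω, X 0 ω = x0)
    (β γ : ℕ → ℝ)
    (hβnonneg : ∀ k, 0 ≤ β k) (hβlt : ∀ k, β k < 1)
    (hβmono : ∀ k, β (k + 1) ≤ β k)
    (hγ : ∀ k, γ k = 2 * (1 - β k / Real.sqrt m) * c / L)
    -- stochastic coordinate PIGD iteration
    (hiter_off : ∀ (k : ℕ) (ω : Ω) (j : Fin m), j ≠ idx k ω → X (k + 1) ω j = X k ω j)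
    (hiter : ∀ (k : ℕ) (ω : Ω),
      X (k + 1) ω (idx k ω)
        = prox (idx k ω) (γ k)
            (X k ω (idx k ω) - γ k • f' (X k ω) (idx k ω)
              + β k • (X k ω (idx k ω) - X ((k : ℤ) - 1) ω (idx k ω))))
    -- all expectations appearing are finite
    (hintF : ∀ k : ℕ, MeasureTheory.Integrable (fun ω => F (X k ω)) μ)
    (hintD : ∀ k : ℕ,
      MeasureTheory.Integrable (fun ω => ‖X k ω - X ((k : ℤ) - 1) ω‖ ^ 2) μ) :
    ∀ k : ℕ,
      ((∫ ω, F (X k ω) ∂μ)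
          + β k / (2 * Real.sqrt m * γ k) * ∫ ω, ‖X k ω - X ((k : ℤ) - 1) ω‖ ^ 2 ∂μ)
        - ((∫ ω, F (X (k + 1) ω) ∂μ)
          + β (k + 1) / (2 * Real.sqrt m * γ (k + 1)) * ∫ ω, ‖X (k + 1) ω - X k ω‖ ^ 2 ∂μ)
      ≥ ((1 - β k / Real.sqrt m) / γ k - L / 2) * ∫ ω, ‖X (k + 1) ω - X k ω‖ ^ 2 ∂μ := by
  intro k
  have hsqrt : 1 ≤ Real.sqrt m := Real.one_le_sqrt.2 (by exact_mod_cast hm)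
  have hγpos : ∀ n, 0 < γ n := fun n =>
    hγ n ▸ inertial_stepsize_pos hsqrt (hβnonneg n) (hβlt n) hc0 hL
  obtain ⟨φ, ψ, hφψ⟩ := PiLp.exists_eq_comp_history_of_update hXm1 hX0 hiter_off
    (P := fun n i x xp => prox i (γ n) (x i - γ n • f' x i + β n • (x i - xp i))) hiter k
  obtain ⟨hint_block, hcoord⟩ := integral_norm_sq_apply_uniform_index hidx_indep hidx_meas
    (fun j => by rw [Fintype.card_fin]; exact hidx_unif k j)
    (V := fun ω => X k ω - X (k - 1) ω)
    (Φ := fun v => φ v - ψ v) (fun ω => by rw [(hφψ ω).1, (hφψ ω).2]) (hintD k)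
  have hstep : ∀ ω, F (X (k + 1) ω) ≤ F (X k ω)
      - ((1 - β k / Real.sqrt m) / γ k - L / 2 + β k / (2 * Real.sqrt m * γ k))
        * ‖X (k + 1) ω - X k ω‖ ^ 2
      + β k * Real.sqrt m / (2 * γ k) * ‖(X k ω - X (k - 1) ω) (idx k ω)‖ ^ 2 := fun ω => by
    rw [hF, hF, PiLp.sub_apply]
    refine coordinate_prox_step_le hf' hlip (hgconv _) (hγpos k) (hβnonneg k)
      (zero_lt_one.trans_le hsqrt) (hiter_off k ω) ?_
    rw [hiter k ω]
    exact hprox _ _ _ (hγpos k)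
  have hintF' : Integrable (fun ω => F (X (k + 1) ω)) μ := by exact_mod_cast hintF (k + 1)
  have hintD' : Integrable (fun ω => ‖X (k + 1) ω - X k ω‖ ^ 2) μ := by simpa using hintD (k + 1)
  have hmean := integral_le_integral_sub_mul_add_mul hintF' (hintF k) hintD' hint_block hstep
  rw [hcoord, Fintype.card_fin] at hmean
  have hcoef : β (k + 1) / (2 * Real.sqrt m * γ (k + 1)) ≤ β k / (2 * Real.sqrt m * γ k) := by
    rw [hγ, hγ]
    exact div_inertial_stepsize_le hsqrt (hβnonneg _) (hβmono k) (hβlt k) hc0 hL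
  have hcoord_coef : ∀ D : ℝ, β k * Real.sqrt m / (2 * γ k) * ((m : ℝ)⁻¹ * D)
      = β k / (2 * Real.sqrt m * γ k) * D := fun D => by
    have : (m : ℝ) ≠ 0 := by exact_mod_cast hm.ne'
    field_simp
    rw [Real.sq_sqrt (Nat.cast_nonneg m)]
  rw [hcoord_coef] at hmean
  have hA : 0 ≤ ∫ ω, ‖X (k + 1) ω - X k ω‖ ^ 2 ∂μ := integral_nonneg fun ω => sq_nonneg _
  linarith [mul_le_mul_of_nonneg_right hcoef hA]

/-- Lemma 9, expected descent inequality for stochastic coordinate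
PIGD. -/
theorem pigd_stmt12
    {m : ℕ} (hm : 0 < m) (nn : Fin m → ℕ)
    (f F : PIGDSpace m nn → ℝ)
    (g : (i : Fin m) → EuclideanSpace ℝ (Fin (nn i)) → ℝ)
    (f' : PIGDSpace m nn → PIGDSpace m nn)
    (L c : ℝ) (hL : 0 < L) (hc0 : 0 < c) (hc1 : c < 1)
    (hfconv : ConvexOn ℝ Set.univ f)
    (hgconv : ∀ i, ConvexOn ℝ Set.univ (g i))
    (hgcont : ∀ i, Continuous (g i))
    (hf' : ∀ x, HasGradientAt f (f' x) x)
    (hlip : ∀ x y, ‖f' x - f' y‖ ≤ L * ‖x - y‖)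
    (hF : ∀ x, F x = f x + ∑ i, g i (x i))
    (hFbdd : BddBelow (Set.range F))
    (prox : (i : Fin m) → ℝ → EuclideanSpace ℝ (Fin (nn i)) → EuclideanSpace ℝ (Fin (nn i)))
    (hprox : ∀ (i : Fin m) (γ' : ℝ) (y : EuclideanSpace ℝ (Fin (nn i))), 0 < γ' →
      IsMinOn (fun z => ‖z - y‖ ^ 2 / (2 * γ') + g i z) Set.univ (prox i γ' y))
    -- probability space and i.i.d. uniform random indices
    {Ω : Type} [MeasurableSpace Ω] (μ : MeasureTheory.Measure Ω)
    [MeasureTheory.IsProbabilityMeasure μ]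
    (idx : ℕ → Ω → Fin m)
    (hidx_meas : ∀ k, Measurable (idx k))
    (hidx_indep : ProbabilityTheory.iIndepFun idx μ)
    (hidx_unif : ∀ (k : ℕ) (j : Fin m), μ {ω | idx k ω = j} = (m : ENNReal)⁻¹)
    -- the random iterates, with deterministic initial points
    (X : ℤ → Ω → PIGDSpace m nn)
    (xm1 x0 : PIGDSpace m nn)
    (hXm1 : ∀ ω, X (-1) ω = xm1) (hX0 : ∀ ω, X 0 ω = x0)
    (β γ : ℕ → ℝ)
    (hβnonneg : ∀ k, 0 ≤ β k) (hβlt : ∀ k, β k < 1)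
    (hβmono : ∀ k, β (k + 1) ≤ β k)
    (hγ : ∀ k, γ k = 2 * (1 - β k / Real.sqrt m) * c / L)
    -- stochastic coordinate PIGD iteration
    (hiter_off : ∀ (k : ℕ) (ω : Ω) (j : Fin m), j ≠ idx k ω → X (k + 1) ω j = X k ω j)
    (hiter : ∀ (k : ℕ) (ω : Ω),
      X (k + 1) ω (idx k ω)
        = prox (idx k ω) (γ k)
            (X k ω (idx k ω) - γ k • f' (X k ω) (idx k ω)
              + β k • (X k ω (idx k ω) - X ((k : ℤ) - 1) ω (idx k ω))))
    -- all expectations appearing are finite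
    (hintF : ∀ k : ℕ, MeasureTheory.Integrable (fun ω => F (X k ω)) μ)
    (hintD : ∀ k : ℕ,
      MeasureTheory.Integrable (fun ω => ‖X k ω - X ((k : ℤ) - 1) ω‖ ^ 2) μ) :
    ∀ k : ℕ,
      ((∫ ω, F (X k ω) ∂μ)
          + β k / (2 * Real.sqrt m * γ k) * ∫ ω, ‖X k ω - X ((k : ℤ) - 1) ω‖ ^ 2 ∂μ)
        - ((∫ ω, F (X (k + 1) ω) ∂μ)
          + β (k + 1) / (2 * Real.sqrt m * γ (k + 1)) * ∫ ω, ‖X (k + 1) ω - X k ω‖ ^ 2 ∂μ)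
      ≥ ((1 - β k / Real.sqrt m) / γ k - L / 2) * ∫ ω, ‖X (k + 1) ω - X k ω‖ ^ 2 ∂μ :=
  pigd_stmt12_general hm nn f F g f' L c hL hc0 hgconv hf' hlip hF prox hprox μ idx hidx_meas
    hidx_indep hidx_unif X xm1 x0 hXm1 hX0 β γ hβnonneg hβlt hβmono hγ hiter_off hiter hintF hintD
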